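/- arXiv:math-ph/0701039 — 4 statements merged into one kernel-verified Lean document; each statement's English description precedes it below -/
import Mathlib

section
/- Cousin's Lemma: for any function δ : [a,b] → (0,∞), there exists an HK-partition for δ, i.e., points a = t₀ ≤ τ₁ ≤ t₁ ≤ ⋯ ≤ τₙ ≤ tₙ = b such that for each 0 ≤ i ≤ n−1, both t_i and t_{i+1} lie in the interval (τ_{i+1} − δ(τ_{i+1}), τ_{i+1} + δ(τ_{i+1})). -/
/-- `{t 0, τ 1, t 1, …, τ n, t n}` is an HK-partition of `[a,b]` for the gauge `δ`:
`a = t 0 ≤ τ 1 ≤ t 1 ≤ ⋯ ≤ τ n ≤ t n = b` and each `t i`, `t (i+1)` lies in the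
interval `(τ (i+1) - δ (τ (i+1)), τ (i+1) + δ (τ (i+1)))`. -/
def IsHKPartition (a b : ℝ) (δ : ℝ → ℝ) (n : ℕ) (t τ : ℕ → ℝ) : Prop :=
  t 0 = a ∧ t n = b ∧
  (∀ i < n, t i ≤ τ (i + 1) ∧ τ (i + 1) ≤ t (i + 1)) ∧
  (∀ i < n,
    t i ∈ Set.Ioo (τ (i + 1) - δ (τ (i + 1))) (τ (i + 1) + δ (τ (i + 1))) ∧
    t (i + 1) ∈ Set.Ioo (τ (i + 1) - δ (τ (i + 1))) (τ (i + 1) + δ (τ (i + 1))))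

lemma IsHKPartition.extend {a x : ℝ} {δ : ℝ → ℝ} {n : ℕ} {t τ : ℕ → ℝ}
    (h : IsHKPartition a x δ n t τ) {σ y : ℝ} (hxσ : x ≤ σ) (hσy : σ ≤ y)
    (hx : x ∈ Set.Ioo (σ - δ σ) (σ + δ σ)) (hy : y ∈ Set.Ioo (σ - δ σ) (σ + δ σ)) :
    IsHKPartition a y δ (n + 1) (fun i => if i ≤ n then t i else y)
      (fun i => if i ≤ n then τ i else σ) := by
  obtain ⟨h0, hn, hord, hmem⟩ := h
  refine ⟨by simp [h0], by simp, ?_, ?_⟩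
  · intro i hi
    rcases lt_or_eq_of_le (Nat.lt_succ_iff.mp hi) with hi' | hi'
    · have h1 : i + 1 ≤ n := hi'
      simp only [if_pos (le_of_lt hi'), if_pos h1]
      exact hord i hi'
    · subst hi'
      simp only [le_refl, if_pos, Nat.succ_le_iff, lt_irrefl, if_neg (Nat.not_succ_le_self i)]
      exact ⟨hn ▸ hxσ, hσy⟩
  · intro i hi
    rcases lt_or_eq_of_le (Nat.lt_succ_iff.mp hi) with hi' | hi'
    · have h1 : i + 1 ≤ n := hi'
      simp only [if_pos (le_of_lt hi'), if_pos h1]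
      exact hmem i hi'
    · subst hi'
      simp only [le_refl, if_pos, if_neg (Nat.not_succ_le_self i)]
      exact ⟨hn ▸ hx, hy⟩

/-- Cousin's Lemma: for any gauge `δ : [a,b] → (0,∞)` there exists an HK-partition for `δ`. -/
theorem cousin_lemma (a b : ℝ) (hab : a ≤ b) (δ : ℝ → ℝ)
    (hδ : ∀ x ∈ Set.Icc a b, 0 < δ x) :
    ∃ (n : ℕ) (t τ : ℕ → ℝ), 0 < n ∧ IsHKPartition a b δ n t τ := by
  set S : Set ℝ := {x | x ∈ Set.Icc a b ∧ ∃ n t τ, 0 < n ∧ IsHKPartition a x δ n t τ} with hS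
  have hδa : 0 < δ a := hδ a ⟨le_refl a, hab⟩
  have haS : a ∈ S := by
    refine ⟨⟨le_refl a, hab⟩, 1, (fun _ => a), (fun _ => a), one_pos,
      rfl, rfl, fun i hi => ⟨le_refl a, le_refl a⟩, fun i hi => ?_⟩
    constructor <;> exact ⟨by linarith, by linarith⟩
  have hSne : S.Nonempty := ⟨a, haS⟩
  have hSbdd : BddAbove S := ⟨b, fun x hx => hx.1.2⟩
  set c := sSup S with hc
  have hac : a ≤ c := le_csSup hSbdd haS
  have hcb : c ≤ b := csSup_le hSne fun x hx => hx.1.2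
  have hδc : 0 < δ c := hδ c ⟨hac, hcb⟩
  have hcS : c ∈ S := by
    obtain ⟨x, hxS, hxgt⟩ := exists_lt_of_lt_csSup hSne (by linarith : c - δ c < c)
    have hxc : x ≤ c := le_csSup hSbdd hxS
    obtain ⟨hxab, n, t, τ, hn, hpart⟩ := hxS
    refine ⟨⟨hac, hcb⟩, n + 1, _, _, Nat.succ_pos n,
      hpart.extend hxc (le_refl c) ⟨hxgt, by linarith⟩ ⟨by linarith, by linarith⟩⟩
  rcases eq_or_lt_of_le hcb with hcb' | hcb'
  · obtain ⟨_, n, t, τ, hn, hpart⟩ := hcS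
    exact ⟨n, t, τ, hn, hcb' ▸ hpart⟩
  · exfalso
    set y := min b (c + δ c / 2) with hy
    have hcy : c < y := lt_min hcb' (by linarith)
    have hyb : y ≤ b := min_le_left _ _
    have hylt : y < c + δ c := lt_of_le_of_lt (min_le_right _ _) (by linarith)
    obtain ⟨_, n, t, τ, hn, hpart⟩ := hcS
    have hyS : y ∈ S :=
      ⟨⟨le_trans hac hcy.le, hyb⟩, n + 1, _, _, Nat.succ_pos n,
        hpart.extend (le_refl c) hcy.le ⟨by linarith, by linarith⟩ ⟨by linarith, hylt⟩⟩
    exact absurd (le_csSup hSbdd hyS) (not_le.mpr hcy)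
end

section
/- If A : [a,b] → L(H) is Bochner integrable, then A has a uniform HK-integral and the two integrals agree: (B)∫ₐᵇ A(t)dt = (HK)∫ₐᵇ A(t)dt. -/
variable {H : Type*} [NormedAddCommGroup H] [InnerProductSpace ℂ H]
  [CompleteSpace H] [TopologicalSpace.SeparableSpace H]

/-- `Q` is the uniform (operator-norm) Henstock-Kurzweil integral of the family
`A : [a,b] → L(H)`: for every `ε > 0` there is a gauge `δ` such that the Riemann sums
of every HK-partition for `δ` are within `ε` of `Q` in operator norm. -/
def IsHKIntegral (a b : ℝ) (A : ℝ → H →L[ℂ] H) (Q : H →L[ℂ] H) : Prop :=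
  ∀ ε > 0, ∃ δ : ℝ → ℝ, (∀ x ∈ Set.Icc a b, 0 < δ x) ∧
    ∀ (n : ℕ) (t τ : ℕ → ℝ), IsHKPartition a b δ n t τ →
      ‖(∑ i ∈ Finset.range n, (t (i + 1) - t i) • A (τ (i + 1))) - Q‖ < ε

/-!
An HK-partition of `[a, b]` subordinate to a gauge is, after discarding its degenerate
subintervals (which contribute nothing to the Riemann sum), a Henstock tagged partition of the box
`(a, b]` of `Fin 1 → ℝ` with the same Riemann sum. Mathlib's theorem that a Bochner integrable
function is Henstock box integrable, with the same integral, then gives the uniform HK-integral.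
When `b ≤ a`, every HK-partition has zero increments and `Icc a b` is a null set.
-/

open MeasureTheory Set BoxIntegral

namespace IsHKPartition

variable {a b : ℝ} {δ : ℝ → ℝ} {n : ℕ} {t τ : ℕ → ℝ}

lemma le_succ (hP : IsHKPartition a b δ n t τ) {i : ℕ} (hi : i < n) : t i ≤ t (i + 1) :=
  (hP.2.2.1 i hi).1.trans (hP.2.2.1 i hi).2

lemma monotoneOn (hP : IsHKPartition a b δ n t τ) : MonotoneOn t (Iic n) :=
  monotoneOn_of_le_add_one ordConnected_Iic fun _ _ _ hi => hP.le_succ (Nat.lt_of_succ_le hi)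

lemma mem_Icc (hP : IsHKPartition a b δ n t τ) {k : ℕ} (hk : k ≤ n) : t k ∈ Icc a b := by
  refine ⟨?_, ?_⟩
  · simpa only [hP.1] using hP.monotoneOn (Nat.zero_le n) hk (Nat.zero_le k)
  · simpa only [hP.2.1] using hP.monotoneOn hk (le_refl n) hk

lemma sub_eq_zero_of_le (hP : IsHKPartition a b δ n t τ) (hba : b ≤ a) {i : ℕ} (hi : i < n) :
    t (i + 1) - t i = 0 := by
  have hnonneg : ∀ j ∈ Finset.range n, 0 ≤ t (j + 1) - t j :=
    fun j hj => sub_nonneg.2 (hP.le_succ (Finset.mem_range.1 hj))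
  have htelescope : ∑ j ∈ Finset.range n, (t (j + 1) - t j) = b - a := by
    rw [Finset.sum_range_sub, hP.1, hP.2.1]
  have hsum : ∑ j ∈ Finset.range n, (t (j + 1) - t j) = 0 :=
    le_antisymm (by linarith) (Finset.sum_nonneg hnonneg)
  exact (Finset.sum_eq_zero_iff_of_nonneg hnonneg).1 hsum i (Finset.mem_range.2 hi)

end IsHKPartition

lemma isHKIntegral_of_le {E : Type*} [NormedAddCommGroup E] [InnerProductSpace ℂ E] {a b : ℝ}
    (hba : b ≤ a) (A : ℝ → E →L[ℂ] E) : IsHKIntegral a b A (∫ s in Icc a b, A s) := by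
  intro ε hε
  refine ⟨fun _ => 1, fun _ _ => one_pos, fun n t τ hP => ?_⟩
  have hvol : volume (Icc a b) = 0 := by simp [hba]
  rw [setIntegral_measure_zero _ hvol, sub_zero, Finset.sum_eq_zero fun i hi => by
    rw [hP.sub_eq_zero_of_le hba (Finset.mem_range.1 hi), zero_smul]]
  simpa using hε

def intervalBox {a b : ℝ} (hab : a < b) : Box (Fin 1) :=
  ⟨fun _ => a, fun _ => b, fun _ => hab⟩

section intervalBox

variable {a b : ℝ} (hab : a < b)

lemma coe_intervalBox : (intervalBox hab : Set (Fin 1 → ℝ)) = (fun x => x 0) ⁻¹' Ioc a b := by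
  ext x
  simp [intervalBox, Box.mem_coe, Box.mem_mk, Fin.forall_fin_one]

lemma mem_Icc_intervalBox {x : Fin 1 → ℝ} : x ∈ Box.Icc (intervalBox hab) ↔ x 0 ∈ Icc a b := by
  simp [Box.Icc_def, intervalBox, Pi.le_def, Fin.forall_fin_one]

lemma intervalBox_le_intervalBox {c d : ℝ} (hcd : c < d) (hca : c ≤ a) (hbd : b ≤ d) :
    intervalBox hab ≤ intervalBox hcd :=
  Box.le_iff_bounds.2 ⟨fun _ => hca, fun _ => hbd⟩

lemma volume_intervalBox {F : Type*} [NormedAddCommGroup F] [NormedSpace ℝ F] (y : F) :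
    BoxAdditiveMap.volume (intervalBox hab) y = (b - a) • y := by
  simp [BoxAdditiveMap.volume_apply, intervalBox]

end intervalBox

section TaggedPartition

variable {F : Type*} [NormedAddCommGroup F] [NormedSpace ℝ F] {a b : ℝ} {n : ℕ} {t τ : ℕ → ℝ}
  {r : (Fin 1 → ℝ) → Ioi (0 : ℝ)}

lemma IsHKPartition.exists_taggedPrepartition_subinterval (hab : a < b) (f : ℝ → F)
    (hP : IsHKPartition a b (fun x => r fun _ => x) n t τ) {i : ℕ} (hi : i < n)
    (hti : t i < t (i + 1)) :
    ∃ π : TaggedPrepartition (intervalBox hab),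
      π.iUnion = (fun x => x 0) ⁻¹' Ioc (t i) (t (i + 1)) ∧ π.IsHenstock ∧ π.IsSubordinate r ∧
        integralSum (fun x => f (x 0)) BoxAdditiveMap.volume π =
          (t (i + 1) - t i) • f (τ (i + 1)) := by
  have hJ : intervalBox hti ≤ intervalBox hab :=
    intervalBox_le_intervalBox _ _ (hP.mem_Icc hi.le).1 (hP.mem_Icc hi).2
  have htag : τ (i + 1) ∈ Icc (t i) (t (i + 1)) := hP.2.2.1 i hi
  have hx : (fun _ => τ (i + 1)) ∈ Box.Icc (intervalBox hab) :=
    (mem_Icc_intervalBox hab).2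
      ⟨(hP.mem_Icc hi.le).1.trans htag.1, htag.2.trans (hP.mem_Icc hi).2⟩
  refine ⟨TaggedPrepartition.single _ _ hJ _ hx, ?_, ?_, ?_, ?_⟩
  · rw [TaggedPrepartition.iUnion_single, coe_intervalBox]
  · exact (TaggedPrepartition.isHenstock_single_iff hJ hx).2 ((mem_Icc_intervalBox hti).2 htag)
  · refine (TaggedPrepartition.isSubordinate_single hJ hx).2 fun y hy => ?_
    obtain ⟨hlo, -⟩ := (hP.2.2.2 i hi).1
    obtain ⟨-, hhi⟩ := (hP.2.2.2 i hi).2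
    obtain ⟨hy₁, hy₂⟩ := (mem_Icc_intervalBox hti).1 hy
    rw [Metric.mem_closedBall, dist_pi_le_iff (r _).2.le, Fin.forall_fin_one, Real.dist_eq, abs_le]
    constructor <;> linarith
  · simp [integralSum, TaggedPrepartition.single, volume_intervalBox]

lemma IsHKPartition.exists_taggedPrepartition_Ioc (hab : a < b) (f : ℝ → F)
    (hP : IsHKPartition a b (fun x => r fun _ => x) n t τ) :
    ∀ k ≤ n, ∃ π : TaggedPrepartition (intervalBox hab),
      π.iUnion = (fun x => x 0) ⁻¹' Ioc a (t k) ∧ π.IsHenstock ∧ π.IsSubordinate r ∧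
        integralSum (fun x => f (x 0)) BoxAdditiveMap.volume π =
          ∑ i ∈ Finset.range k, (t (i + 1) - t i) • f (τ (i + 1))
  | 0, _ => by
    refine ⟨⟨⊥, fun _ => (intervalBox hab).upper, fun _ => Box.upper_mem_Icc _⟩, ?_, ?_, ?_, ?_⟩
    · simp [hP.1]
    · exact fun _ hJ => absurd hJ Prepartition.notMem_bot
    · exact fun _ hJ => absurd hJ Prepartition.notMem_bot
    · simp [integralSum]
  | k + 1, (hk : k < n) => by
    obtain ⟨π, hU, hH, hS, hsum⟩ := hP.exists_taggedPrepartition_Ioc hab f k hk.le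
    rcases (hP.le_succ hk).eq_or_lt with heq | hlt
    · refine ⟨π, by rw [hU, heq], hH, hS, ?_⟩
      rw [Finset.sum_range_succ, ← hsum, heq, sub_self, zero_smul, add_zero]
    obtain ⟨σ, hσU, hσH, hσS, hσsum⟩ := hP.exists_taggedPrepartition_subinterval hab f hk hlt
    have hdisj : Disjoint π.iUnion σ.iUnion := by
      rw [hU, hσU]
      exact (Ioc_disjoint_Ioc_of_le le_rfl).preimage _
    refine ⟨π.disjUnion σ hdisj, ?_, hH.disjUnion hσH hdisj, hS.disjUnion hσS hdisj, ?_⟩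
    · rw [TaggedPrepartition.iUnion_disjUnion, hU, hσU, ← preimage_union,
        Ioc_union_Ioc_eq_Ioc (hP.mem_Icc hk.le).1 hlt.le]
    · rw [integralSum_disjUnion, hsum, hσsum, Finset.sum_range_succ]

lemma IsHKPartition.exists_memBaseSet_isPartition (hab : a < b) (f : ℝ → F)
    (hP : IsHKPartition a b (fun x => r fun _ => x) n t τ) (c : NNReal) :
    ∃ π : TaggedPrepartition (intervalBox hab),
      IntegrationParams.Henstock.MemBaseSet (intervalBox hab) c r π ∧ π.IsPartition ∧
        integralSum (fun x => f (x 0)) BoxAdditiveMap.volume π =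
          ∑ i ∈ Finset.range n, (t (i + 1) - t i) • f (τ (i + 1)) := by
  obtain ⟨π, hU, hH, hS, hsum⟩ := hP.exists_taggedPrepartition_Ioc hab f n le_rfl
  refine ⟨π, ⟨hS, fun _ => hH, nofun, nofun⟩, ?_, hsum⟩
  rw [TaggedPrepartition.isPartition_iff_iUnion_eq, hU, hP.2.1, coe_intervalBox]

lemma hasIntegral_intervalBox [CompleteSpace F] (hab : a < b) {f : ℝ → F}
    (hf : IntegrableOn f (Icc a b)) :
    HasIntegral (intervalBox hab) IntegrationParams.Henstock (fun x => f (x 0))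
      BoxAdditiveMap.volume (∫ s in Icc a b, f s) := by
  have he := (MeasurableEquiv.funUnique (Fin 1) ℝ).measurableEmbedding
  have hvol := volume_preserving_funUnique (Fin 1) ℝ
  have hf' : IntegrableOn (fun x : Fin 1 → ℝ => f (x 0)) (intervalBox hab) := by
    rw [coe_intervalBox]
    exact (hvol.integrableOn_comp_preimage he).2 (hf.mono_set Ioc_subset_Icc_self)
  have hint : ∫ x in (intervalBox hab : Set (Fin 1 → ℝ)), f (x 0) = ∫ s in Icc a b, f s := by
    rw [coe_intervalBox]
    exact (hvol.setIntegral_preimage_emb he f _).trans (setIntegral_congr_set Ioc_ae_eq_Icc)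
  exact hint ▸ hf'.hasBoxIntegral IntegrationParams.Henstock rfl

end TaggedPartition

lemma isHKIntegral_of_hasIntegral {E : Type*} [NormedAddCommGroup E] [InnerProductSpace ℂ E]
    {a b : ℝ} (hab : a < b) {A : ℝ → E →L[ℂ] E} {Q : E →L[ℂ] E}
    (h : HasIntegral (intervalBox hab) IntegrationParams.Henstock (fun x => A (x 0))
      BoxAdditiveMap.volume Q) :
    IsHKIntegral a b A Q := by
  intro ε hε
  obtain ⟨r, -, hr⟩ := hasIntegral_iff.1 h (ε / 2) (half_pos hε)
  refine ⟨fun x => r 0 fun _ => x, fun x _ => (r 0 _).2, fun n t τ hP => ?_⟩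
  obtain ⟨π, hmem, hπ, hsum⟩ := hP.exists_memBaseSet_isPartition hab A 0
  rw [← hsum, ← dist_eq_norm]
  exact (hr 0 π hmem hπ).trans_lt (half_lt_self hε)

theorem isHKIntegral_of_bochnerIntegrable_general (a b : ℝ)
    (A : ℝ → H →L[ℂ] H)
    (hA : MeasureTheory.IntegrableOn A (Set.Icc a b) MeasureTheory.volume) :
    IsHKIntegral a b A (∫ s in Set.Icc a b, A s) := by
  rcases le_or_gt b a with hba | hab
  · exact isHKIntegral_of_le hba A
  · exact isHKIntegral_of_hasIntegral hab (hasIntegral_intervalBox hab hA)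

/-- If `A : [a,b] → L(H)` is Bochner integrable, then `A` has a uniform HK-integral
and the two integrals agree. -/
theorem isHKIntegral_of_bochnerIntegrable (a b : ℝ) (hab : a ≤ b)
    (A : ℝ → H →L[ℂ] H)
    (hA : MeasureTheory.IntegrableOn A (Set.Icc a b) MeasureTheory.volume) :
    IsHKIntegral a b A (∫ s in Set.Icc a b, A s) :=
  isHKIntegral_of_bochnerIntegrable_general a b A hA
end

section
/- Weak equivalence characterization: for families of unit vectors (φ_ν), (ψ_ν) in Hilbert spaces H_ν, one has ∑_{ν∈I} |1 − |⟨φ_ν, ψ_ν⟩|| < ∞ if and only if there exist complex numbers z_ν with |z_ν| = 1 such that ∑_{ν∈I} |1 − ⟨z_ν φ_ν, ψ_ν⟩| < ∞. -/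
/-!
Taking `z ν` to be the phase `exp (i arg ⟪φ ν, ψ ν⟫)` makes `⟪z ν • φ ν, ψ ν⟫ = |⟪φ ν, ψ ν⟫|`, so the
two series agree term by term. Conversely, for any unimodular `z ν` the reverse triangle inequality
bounds `|1 - |⟪φ ν, ψ ν⟫||` by `|1 - ⟪z ν • φ ν, ψ ν⟫|`.
-/

open scoped ComplexInnerProductSpace

open Complex ComplexConjugate in
theorem inner_exp_arg_mul_I_smul_left {E : Type*} [NormedAddCommGroup E]
    [InnerProductSpace ℂ E] (x y : E) :
    ⟪exp (arg ⟪x, y⟫ * I) • x, y⟫ = ‖⟪x, y⟫‖ := by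
  set u := exp (arg ⟪x, y⟫ * I)
  calc ⟪u • x, y⟫ = conj u * (‖⟪x, y⟫‖ * u) := by rw [inner_smul_left, norm_mul_exp_arg_mul_I]
    _ = ‖⟪x, y⟫‖ * (conj u * u) := by ring
    _ = ‖⟪x, y⟫‖ := by rw [conj_mul', norm_exp_ofReal_mul_I]; simp

theorem abs_one_sub_norm_inner_le {E : Type*} [NormedAddCommGroup E]
    [InnerProductSpace ℂ E] {z : ℂ} (hz : ‖z‖ = 1) (x y : E) :
    |1 - ‖⟪x, y⟫‖| ≤ ‖1 - ⟪z • x, y⟫‖ := by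
  have hnorm : ‖⟪z • x, y⟫‖ = ‖⟪x, y⟫‖ := by
    rw [inner_smul_left, norm_mul, RCLike.norm_conj, hz, one_mul]
  simpa only [norm_one, hnorm] using abs_norm_sub_norm_le (1 : ℂ) ⟪z • x, y⟫

theorem weakEquiv_iff_exists_unimodular_general {I : Type*} {H : I → Type*}
    [∀ ν, NormedAddCommGroup (H ν)] [∀ ν, InnerProductSpace ℂ (H ν)]
    (φ ψ : ∀ ν, H ν) :
    (Summable fun ν => |1 - ‖⟪φ ν, ψ ν⟫‖|) ↔
      ∃ z : I → ℂ, (∀ ν, ‖z ν‖ = 1) ∧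
        Summable fun ν => ‖1 - ⟪z ν • φ ν, ψ ν⟫‖ := by
  constructor
  · intro h
    refine ⟨fun ν => Complex.exp (Complex.arg ⟪φ ν, ψ ν⟫ * Complex.I),
      fun ν => Complex.norm_exp_ofReal_mul_I _, ?_⟩
    have hterm : ∀ ν, ‖(1 : ℂ) - ‖⟪φ ν, ψ ν⟫‖‖ = |1 - ‖⟪φ ν, ψ ν⟫‖| := fun ν => by
      rw [← Complex.ofReal_one, ← Complex.ofReal_sub, Complex.norm_real, Real.norm_eq_abs]
    simpa only [inner_exp_arg_mul_I_smul_left, hterm] using h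
  · rintro ⟨z, hz, hsum⟩
    exact hsum.of_nonneg_of_le (fun _ => abs_nonneg _)
      fun ν => abs_one_sub_norm_inner_le (hz ν) (φ ν) (ψ ν)

/-- Weak equivalence characterization: `∑ ν, |1 - |⟨φ ν, ψ ν⟩|| < ∞` iff there exist
unimodular complex numbers `z ν` with `∑ ν, |1 - ⟨z ν • φ ν, ψ ν⟩| < ∞`. -/
theorem weakEquiv_iff_exists_unimodular {I : Type*} {H : I → Type*}
    [∀ ν, NormedAddCommGroup (H ν)] [∀ ν, InnerProductSpace ℂ (H ν)]
    [∀ ν, CompleteSpace (H ν)] (φ ψ : ∀ ν, H ν)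
    (hφ : ∀ ν, ‖φ ν‖ = 1) (hψ : ∀ ν, ‖ψ ν‖ = 1) :
    (Summable fun ν => |1 - ‖⟪φ ν, ψ ν⟫‖|) ↔
      ∃ z : I → ℂ, (∀ ν, ‖z ν‖ = 1) ∧
        Summable fun ν => ‖1 - ⟪z ν • φ ν, ψ ν⟫‖ :=
  weakEquiv_iff_exists_unimodular_general φ ψ
end

section
/- If the infinite products ∏_{ν∈I} ‖φ_ν‖ and ∏_{ν∈I} ‖ψ_ν‖ both converge (to finite values), then the product ∏_{ν∈I} ⟨φ_ν, ψ_ν⟩ is quasi-convergent, i.e., ∏_{ν∈I} |⟨φ_ν, ψ_ν⟩| converges or equals zero. -/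
open scoped ComplexInnerProductSpace

/-!
By Cauchy–Schwarz, `‖⟪φ ν, ψ ν⟫‖ ≤ ‖φ ν‖ * ‖ψ ν‖`. A product of factors in `[0, 1]` always
converges, its partial products being antitone and bounded below by `0`. So if no factor
`‖⟪φ ν, ψ ν⟫‖` vanishes, it is the product of the convergent `‖φ ν‖ * ‖ψ ν‖` with such a ratio
`‖⟪φ ν, ψ ν⟫‖ / (‖φ ν‖ * ‖ψ ν‖)`; if one factor vanishes, the product is eventually `0`.
-/

namespace Real

theorem multipliable_of_nonneg_of_le_one {ι : Type*} {f : ι → ℝ} (hf₀ : ∀ i, 0 ≤ f i)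
    (hf₁ : ∀ i, f i ≤ 1) : Multipliable f :=
  ⟨_, tendsto_atTop_ciInf (Finset.prod_anti_set_of_le_one hf₀ hf₁)
    ⟨0, by rintro _ ⟨s, rfl⟩; exact Finset.prod_nonneg fun i _ => hf₀ i⟩⟩

theorem multipliable_of_nonneg_of_le {ι : Type*} {f g : ι → ℝ} (hf : ∀ i, 0 ≤ f i)
    (hfg : ∀ i, f i ≤ g i) (hg : Multipliable g) : Multipliable f := by
  by_cases hzero : ∃ i, f i = 0
  · exact multipliable_of_exists_eq_zero hzero
  push Not at hzero
  have hg₀ : ∀ i, 0 < g i := fun i => ((hf i).lt_of_ne' (hzero i)).trans_le (hfg i)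
  have hratio : Multipliable fun i => f i / g i :=
    multipliable_of_nonneg_of_le_one (fun i => div_nonneg (hf i) (hg₀ i).le)
      (fun i => div_le_one_of_le₀ (hfg i) (hg₀ i).le)
  simpa only [mul_div_cancel₀ _ (hg₀ _).ne'] using hg.mul hratio

end Real

theorem quasiConvergent_of_multipliable_general {I : Type*} {H : I → Type*}
    [∀ ν, NormedAddCommGroup (H ν)] [∀ ν, InnerProductSpace ℂ (H ν)]
    (φ ψ : ∀ ν, H ν)
    (hφ : Multipliable fun ν => ‖φ ν‖) (hψ : Multipliable fun ν => ‖ψ ν‖) :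
    (∃ p : ℝ, p ≠ 0 ∧ HasProd (fun ν => ‖⟪φ ν, ψ ν⟫‖) p) ∨
      HasProd (fun ν => ‖⟪φ ν, ψ ν⟫‖) 0 := by
  obtain ⟨p, hp⟩ : Multipliable fun ν => ‖⟪φ ν, ψ ν⟫‖ :=
    Real.multipliable_of_nonneg_of_le (fun _ => norm_nonneg _)
      (fun _ => norm_inner_le_norm _ _) (hφ.mul hψ)
  rcases eq_or_ne p 0 with rfl | hp₀
  · exact Or.inr hp
  · exact Or.inl ⟨p, hp₀, hp⟩

/-- If `∏ ν, ‖φ ν‖` and `∏ ν, ‖ψ ν‖` both converge, then `∏ ν, ⟨φ ν, ψ ν⟩` is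
quasi-convergent: the product of absolute values converges to a nonzero limit, or
converges to zero. -/
theorem quasiConvergent_of_multipliable {I : Type*} {H : I → Type*}
    [∀ ν, NormedAddCommGroup (H ν)] [∀ ν, InnerProductSpace ℂ (H ν)]
    [∀ ν, CompleteSpace (H ν)] (φ ψ : ∀ ν, H ν)
    (hφ : Multipliable fun ν => ‖φ ν‖) (hψ : Multipliable fun ν => ‖ψ ν‖) :
    (∃ p : ℝ, p ≠ 0 ∧ HasProd (fun ν => ‖⟪φ ν, ψ ν⟫‖) p) ∨
      HasProd (fun ν => ‖⟪φ ν, ψ ν⟫‖) 0 :=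
  quasiConvergent_of_multipliable_general φ ψ hφ hψ
end
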